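/- Let A and B be contractions on H such that A and B* are essentially isometric, and assume that ‖Aⁿx‖ → 0 and ‖B*ⁿx‖ → 0 as n → ∞ for every x ∈ H. Then for every T ∈ B(H), the limit lim_{n→∞} ‖AⁿTBⁿ‖ exists and equals ‖T + K(H)‖, the distance in operator norm from T to the ideal of compact operators. -/

import Mathlib

/-!
Modulo compact operators, `Aᵃⁿ Aⁿ` and `Bⁿ Bᵃⁿ` are the identity (`Aᵃ = adjoint A`), so
`T ≡ Aᵃⁿ (Aⁿ T Bⁿ) Bᵃⁿ` and, these factors being contractions, `‖T + K(H)‖ ≤ ‖Aⁿ T Bⁿ‖`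
for every `n`.
Conversely, for compact `K` we have `‖Aⁿ T Bⁿ‖ ≤ ‖T + K‖ + ‖Aⁿ K‖`, and `‖Aⁿ K‖ → 0` because the
bounded family `Aⁿ`, tending strongly to `0`, tends to `0` uniformly on the compact closure of the
image of the unit ball under `K`.
-/

open ContinuousLinearMap Filter Topology Metric

section CompactPerturbation

variable {𝕜 E : Type*} [NontriviallyNormedField 𝕜] [NormedAddCommGroup E] [NormedSpace 𝕜 E]

theorem isCompactOperator_one_sub_pow_mul_pow {X Y : E →L[𝕜] E}
    (h : IsCompactOperator ⇑(1 - Y * X)) (n : ℕ) : IsCompactOperator ⇑(1 - Y ^ n * X ^ n) := by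
  induction n with
  | zero => simpa using isCompactOperator_zero
  | succ n ih =>
    have hsplit : 1 - Y ^ (n + 1) * X ^ (n + 1) = (1 - Y * X) + Y * (1 - Y ^ n * X ^ n) * X := by
      rw [pow_succ' Y, pow_succ X]; noncomm_ring
    rw [hsplit]
    exact h.add ((ih.clm_comp Y).comp_clm X)

theorem isCompactOperator_mul_mul_sub {P Q : E →L[𝕜] E} (hP : IsCompactOperator ⇑(1 - P))
    (hQ : IsCompactOperator ⇑(1 - Q)) (T : E →L[𝕜] E) : IsCompactOperator ⇑(P * T * Q - T) := by
  have hsplit : P * T * Q - T = -((1 - P) * T * Q + T * (1 - Q)) := by noncomm_ring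
  rw [hsplit]
  exact (((hP.comp_clm T).comp_clm Q).add (hQ.clm_comp T)).neg

end CompactPerturbation

section UniformBoundedness

variable {𝕜 E F G : Type*} [NontriviallyNormedField 𝕜] [NormedAddCommGroup E] [NormedSpace 𝕜 E]
  [NormedAddCommGroup F] [NormedSpace 𝕜 F] [NormedAddCommGroup G] [NormedSpace 𝕜 G]
  {ι : Type*} {l : Filter ι}

/-- Bounded families are equicontinuous, and pointwise convergence of an equicontinuous family is
uniform on compact sets (Ascoli). -/
theorem tendstoUniformlyOn_zero_of_norm_le (A : ι → E →L[𝕜] F) {C : ℝ} (hA : ∀ i, ‖A i‖ ≤ C)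
    (h : ∀ x, Tendsto (fun i => A i x) l (𝓝 0)) {M : Set E} (hM : IsCompact M) :
    TendstoUniformlyOn (fun i => ⇑(A i)) 0 l M := by
  have : CompactSpace M := isCompact_iff_compactSpace.mp hM
  have hA_equi : Equicontinuous fun i => ⇑(A i) :=
    ((NormedSpace.equicontinuous_TFAE A).out 5 1).mp (⟨C, hA⟩ : ∃ C, ∀ i, ‖A i‖ ≤ C)
  have hAM_equi : Equicontinuous (M.domRestrict ∘ fun i => ⇑(A i)) :=
    (equicontinuous_restrict_iff _).mpr (hA_equi.equicontinuousOn M)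
  rw [tendstoUniformlyOn_iff_tendstoUniformly_comp_coe]
  exact UniformFun.tendsto_iff_tendstoUniformly.mp
    ((hAM_equi.tendsto_uniformFun_iff_pi l _).mpr (tendsto_pi_nhds.mpr fun x => h x))

theorem tendsto_norm_comp_of_isCompactOperator [NormedAlgebra ℝ 𝕜] (A : ι → F →L[𝕜] G) {C : ℝ}
    (hA : ∀ i, ‖A i‖ ≤ C) (h : ∀ x, Tendsto (fun i => A i x) l (𝓝 0)) {K : E →L[𝕜] F}
    (hK : IsCompactOperator ⇑K) : Tendsto (fun i => ‖(A i).comp K‖) l (𝓝 0) := by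
  have hunif := Metric.tendstoUniformlyOn_iff.mp
    (tendstoUniformlyOn_zero_of_norm_le A hA h (hK.isCompact_closure_image_closedBall 1))
  refine Metric.tendsto_nhds.mpr fun ε hε => ?_
  filter_upwards [hunif (ε / 2) (half_pos hε)] with i hi
  have hle : ‖(A i).comp K‖ ≤ ε / 2 := by
    refine opNorm_le_of_unit_norm (half_pos hε).le fun x hx => ?_
    have hKx : K x ∈ closure (K '' closedBall 0 1) :=
      subset_closure ⟨x, mem_closedBall_zero_iff.mpr hx.le, rfl⟩
    simpa using (hi _ hKx).le
  rw [Real.dist_0_eq_abs, abs_of_nonneg (norm_nonneg _)]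
  linarith

end UniformBoundedness

section EssentialNorm

variable {𝕜 E F : Type*} [NontriviallyNormedField 𝕜] [NormedAddCommGroup E] [NormedSpace 𝕜 E]
  [NormedAddCommGroup F] [NormedSpace 𝕜 F]

/-- The essential norm `‖T + K(E, F)‖`. -/
noncomputable def essNorm (T : E →L[𝕜] F) : ℝ :=
  sInf {r : ℝ | ∃ K : E →L[𝕜] F, IsCompactOperator ⇑K ∧ r = ‖T + K‖}

theorem essNorm_le_norm_add (T : E →L[𝕜] F) {K : E →L[𝕜] F} (hK : IsCompactOperator ⇑K) :
    essNorm T ≤ ‖T + K‖ :=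
  csInf_le ⟨0, by rintro _ ⟨K, -, rfl⟩; exact norm_nonneg _⟩ ⟨K, hK, rfl⟩

theorem essNorm_le_norm_of_isCompactOperator_sub {S T : E →L[𝕜] F}
    (h : IsCompactOperator ⇑(S - T)) : essNorm T ≤ ‖S‖ := by
  simpa using essNorm_le_norm_add T h

theorem exists_norm_add_lt_of_essNorm_lt {T : E →L[𝕜] F} {b : ℝ} (hb : essNorm T < b) :
    ∃ K : E →L[𝕜] F, IsCompactOperator ⇑K ∧ ‖T + K‖ < b := by
  have hne : {r : ℝ | ∃ K : E →L[𝕜] F, IsCompactOperator ⇑K ∧ r = ‖T + K‖}.Nonempty :=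
    ⟨_, 0, isCompactOperator_zero, rfl⟩
  obtain ⟨_, ⟨K, hK, rfl⟩, hlt⟩ := exists_lt_of_csInf_lt hne hb
  exact ⟨K, hK, hlt⟩

end EssentialNorm

section Contractions

variable {𝕜 E : Type*} [NontriviallyNormedField 𝕜] [NormedAddCommGroup E] [NormedSpace 𝕜 E]

theorem norm_pow_le_one_of_norm_le_one {X : E →L[𝕜] E} (hX : ‖X‖ ≤ 1) (n : ℕ) : ‖X ^ n‖ ≤ 1 := by
  induction n with
  | zero => exact norm_id_le
  | succ n ih =>
    rw [pow_succ]
    exact (norm_mul_le _ _).trans (mul_le_one₀ ih (norm_nonneg _) hX)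

theorem norm_mul_mul_le_of_norm_le_one {P Q : E →L[𝕜] E} (hP : ‖P‖ ≤ 1) (hQ : ‖Q‖ ≤ 1)
    (T : E →L[𝕜] E) : ‖P * T * Q‖ ≤ ‖T‖ :=
  calc ‖P * T * Q‖ ≤ ‖P‖ * ‖T‖ * ‖Q‖ := norm_mul₃_le
    _ ≤ 1 * ‖T‖ * 1 := by gcongr
    _ = ‖T‖ := by ring

theorem essNorm_le_norm_pow_mul_mul_pow {X Y Z W : E →L[𝕜] E} (hY : ‖Y‖ ≤ 1) (hW : ‖W‖ ≤ 1)
    (hYX : IsCompactOperator ⇑(1 - Y * X)) (hZW : IsCompactOperator ⇑(1 - Z * W))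
    (T : E →L[𝕜] E) (n : ℕ) : essNorm T ≤ ‖X ^ n * T * Z ^ n‖ := by
  have hcompact : IsCompactOperator ⇑(Y ^ n * (X ^ n * T * Z ^ n) * W ^ n - T) := by
    have := isCompactOperator_mul_mul_sub (isCompactOperator_one_sub_pow_mul_pow hYX n)
      (isCompactOperator_one_sub_pow_mul_pow hZW n) T
    rwa [show Y ^ n * X ^ n * T * (Z ^ n * W ^ n) = Y ^ n * (X ^ n * T * Z ^ n) * W ^ n by
      noncomm_ring] at this
  exact (essNorm_le_norm_of_isCompactOperator_sub hcompact).trans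
    (norm_mul_mul_le_of_norm_le_one (norm_pow_le_one_of_norm_le_one hY n)
      (norm_pow_le_one_of_norm_le_one hW n) _)

theorem norm_mul_mul_le_norm_add_add {P Q : E →L[𝕜] E} (hP : ‖P‖ ≤ 1) (hQ : ‖Q‖ ≤ 1)
    (T K : E →L[𝕜] E) : ‖P * T * Q‖ ≤ ‖T + K‖ + ‖P * K‖ :=
  calc ‖P * T * Q‖ = ‖P * (T + K) * Q - P * K * Q‖ := by noncomm_ring
    _ ≤ ‖P * (T + K) * Q‖ + ‖P * K * Q‖ := norm_sub_le _ _
    _ ≤ ‖T + K‖ + ‖P * K‖ := by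
      gcongr
      · exact norm_mul_mul_le_of_norm_le_one hP hQ _
      · exact (norm_mul_le _ _).trans (mul_le_of_le_one_right (norm_nonneg _) hQ)

end Contractions

theorem stmt_6_general {H : Type*} [NormedAddCommGroup H] [InnerProductSpace ℂ H]
    [CompleteSpace H]
    (A B T : H →L[ℂ] H)
    (hAc : ‖A‖ ≤ 1) (hBc : ‖B‖ ≤ 1)
    (hA : IsCompactOperator (⇑((1 : H →L[ℂ] H) - adjoint A * A)))
    (hB : IsCompactOperator (⇑((1 : H →L[ℂ] H) - B * adjoint B)))
    (hAn : ∀ x : H, Tendsto (fun n : ℕ => ‖(A ^ n) x‖) atTop (𝓝 0)) :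
    Tendsto (fun n : ℕ => ‖A ^ n * T * B ^ n‖) atTop
      (𝓝 (sInf {r : ℝ | ∃ K : H →L[ℂ] H, IsCompactOperator ⇑K ∧ r = ‖T + K‖})) := by
  change Tendsto _ atTop (𝓝 (essNorm T))
  have hlower : ∀ n, essNorm T ≤ ‖A ^ n * T * B ^ n‖ :=
    essNorm_le_norm_pow_mul_mul_pow ((adjoint.norm_map A).trans_le hAc)
      ((adjoint.norm_map B).trans_le hBc) hA hB T
  refine tendsto_order.mpr ⟨fun a ha => .of_forall fun n => ha.trans_le (hlower n), fun b hb => ?_⟩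
  obtain ⟨K, hK, hTK⟩ := exists_norm_add_lt_of_essNorm_lt hb
  have hAK : Tendsto (fun n => ‖A ^ n * K‖) atTop (𝓝 0) :=
    tendsto_norm_comp_of_isCompactOperator (fun n => A ^ n) (norm_pow_le_one_of_norm_le_one hAc)
      (fun x => tendsto_zero_iff_norm_tendsto_zero.mpr (hAn x)) hK
  have hupper : Tendsto (fun n => ‖T + K‖ + ‖A ^ n * K‖) atTop (𝓝 ‖T + K‖) := by
    simpa using hAK.const_add ‖T + K‖
  filter_upwards [hupper.eventually (gt_mem_nhds hTK)] with n hn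
  exact (norm_mul_mul_le_norm_add_add (norm_pow_le_one_of_norm_le_one hAc n)
    (norm_pow_le_one_of_norm_le_one hBc n) T K).trans_lt hn

/-- **Theorem 2.7.** Let `A` and `B*` be essentially isometric contractions on `H` with
`‖Aⁿx‖ → 0` and `‖B*ⁿx‖ → 0` for all `x ∈ H`. Then for every `T ∈ B(H)`,
`lim ‖AⁿTBⁿ‖ = ‖T + K(H)‖ = inf {‖T + K‖ : K compact}`. -/
theorem stmt_6 {H : Type*} [NormedAddCommGroup H] [InnerProductSpace ℂ H]
    [CompleteSpace H] [TopologicalSpace.SeparableSpace H]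
    (hinf : ¬ FiniteDimensional ℂ H)
    (A B T : H →L[ℂ] H)
    (hAc : ‖A‖ ≤ 1) (hBc : ‖B‖ ≤ 1)
    (hA : IsCompactOperator (⇑((1 : H →L[ℂ] H) - adjoint A * A)))
    (hB : IsCompactOperator (⇑((1 : H →L[ℂ] H) - B * adjoint B)))
    (hAn : ∀ x : H, Tendsto (fun n : ℕ => ‖(A ^ n) x‖) atTop (𝓝 0))
    (hBn : ∀ x : H, Tendsto (fun n : ℕ => ‖((adjoint B) ^ n) x‖) atTop (𝓝 0)) :
    Tendsto (fun n : ℕ => ‖A ^ n * T * B ^ n‖) atTop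
      (𝓝 (sInf {r : ℝ | ∃ K : H →L[ℂ] H, IsCompactOperator ⇑K ∧ r = ‖T + K‖})) :=
  stmt_6_general A B T hAc hBc hA hB hAn
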